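/- Theorem 3 (Poisson sampling): Suppose the sampling indicators I_1,…,I_N are mutually independent (Poisson sampling) and that a ≤ 1/(K+1). Then the IHT estimator has mean-squared error no larger than the HT estimator: E[(t̂_IHT − t_y)²] ≤ E[(t̂_HT − t_y)²]. -/

import Mathlib

/-! Under Poisson sampling the mean-squared error of `∑ I_k y_k / w_k` is its squared bias plus
`∑ (y_k / w_k)² π_k (1 - π_k)`. Replacing `π_k` by `a` on `U₂` creates the bias
`-∑_{U₂} c_k y_k` with `c_k = 1 - π_k / a ∈ [0, 1]`, whose square Cauchy–Schwarz bounds by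
`K ∑_{U₂} c_k y_k²`, while it lowers the variance term of `k` by `y_k² (1 - π_k)(1/π_k - π_k/a²)`.
Termwise this saving dominates `K c_k y_k²` as soon as `π_k ≤ a` and `a (K + 1) ≤ 1`. -/

open MeasureTheory ProbabilityTheory Finset

section Moments

variable {Ω : Type*} [MeasurableSpace Ω] {μ : Measure Ω} [IsProbabilityMeasure μ]

theorem integral_sq_sum_mul_sub_const {ι : Type*} [Fintype ι] {X : ι → Ω → ℝ}
    (hX : ∀ k, MemLp (X k) 2 μ) (hindep : Pairwise fun j k => X j ⟂ᵢ[μ] X k)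
    (d : ι → ℝ) (c : ℝ) :
    ∫ ω, (∑ k, X k ω * d k - c) ^ 2 ∂μ
      = (∑ k, μ[X k] * d k - c) ^ 2 + ∑ k, Var[X k; μ] * d k ^ 2 := by
  set Y : ι → Ω → ℝ := fun k ω => X k ω * d k
  have hY : ∀ k, MemLp (Y k) 2 μ := fun k => (hX k).mul_const (d k)
  have hsum : MemLp (fun ω => ∑ k, Y k ω) 2 μ := memLp_finsetSum _ fun k _ => hY k
  have hS : MemLp (fun ω => ∑ k, Y k ω - c) 2 μ := hsum.sub (memLp_const c)
  have hmean : μ[fun ω => ∑ k, Y k ω - c] = ∑ k, μ[X k] * d k - c := by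
    rw [integral_sub (hsum.integrable one_le_two) (integrable_const c),
      integral_finsetSum _ fun k _ => (hY k).integrable one_le_two]
    simp [Y, integral_mul_const]
  have hvar : Var[fun ω => ∑ k, Y k ω - c; μ] = ∑ k, Var[X k; μ] * d k ^ 2 := by
    rw [variance_sub_const hsum.aestronglyMeasurable, ← Finset.sum_fn,
      IndepFun.variance_sum (fun k _ => hY k)
        fun j _ k _ hjk => (hindep hjk).comp (measurable_mul_const _) (measurable_mul_const _)]
    exact sum_congr rfl fun k _ => variance_mul_const _ _ _
  rw [← hmean, ← hvar, variance_eq_sub hS]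
  simp only [Pi.pow_apply]
  ring

variable {X : Ω → ℝ}

theorem memLp_of_forall_eq_zero_or_eq_one (hX : Measurable X) (h01 : ∀ ω, X ω = 0 ∨ X ω = 1)
    (q : ENNReal) : MemLp X q μ :=
  .of_bound hX.aestronglyMeasurable 1 <| .of_forall fun ω => by rcases h01 ω with h | h <;> simp [h]

theorem variance_eq_mul_one_sub_of_forall_eq_zero_or_eq_one (hX : Measurable X)
    (h01 : ∀ ω, X ω = 0 ∨ X ω = 1) : Var[X; μ] = μ[X] * (1 - μ[X]) := by
  have hsq : X ^ 2 = X := funext fun ω => by rcases h01 ω with h | h <;> simp [h]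
  rw [variance_eq_sub (memLp_of_forall_eq_zero_or_eq_one hX h01 2), hsq]
  ring

end Moments

theorem natCast_mul_one_sub_div_mul_sq_le {p a : ℝ} {n : ℕ} (hp : 0 < p) (hpa : p ≤ a)
    (ha : a * (n + 1) ≤ 1) (y : ℝ) :
    n * ((1 - p / a) * y ^ 2) ≤ ((y / p) ^ 2 - (y / a) ^ 2) * (p * (1 - p)) := by
  have ha0 : 0 < a := hp.trans_le hpa
  -- `n a ≤ 1 - a` reduces this to `p² ≤ a`
  have hgap : 0 ≤ (a + p) * (1 - p) - n * p * a := by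
    nlinarith [mul_le_mul_of_nonneg_left ha hp.le, mul_le_mul_of_nonneg_left hpa hp.le,
      mul_le_mul_of_nonneg_left hpa ha0.le]
  have key : ((y / p) ^ 2 - (y / a) ^ 2) * (p * (1 - p)) - n * ((1 - p / a) * y ^ 2)
      = ((a + p) * (1 - p) - n * p * a) * (a - p) * y ^ 2 / (p * a ^ 2) := by
    field_simp
    ring
  have hquot : 0 ≤ ((a + p) * (1 - p) - n * p * a) * (a - p) * y ^ 2 / (p * a ^ 2) := by
    have := sub_nonneg.2 hpa
    positivity
  linarith

theorem sq_sum_div_sub_one_mul_le {ι : Type*} (s : Finset ι) {p : ι → ℝ} {a : ℝ}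
    (hp : ∀ k ∈ s, 0 < p k) (hpa : ∀ k ∈ s, p k ≤ a) (ha : a * (#s + 1) ≤ 1) (y : ι → ℝ) :
    (∑ k ∈ s, (p k / a - 1) * y k) ^ 2
      ≤ ∑ k ∈ s, ((y k / p k) ^ 2 - (y k / a) ^ 2) * (p k * (1 - p k)) := by
  set c : ι → ℝ := fun k => 1 - p k / a
  have ha0 : ∀ k ∈ s, 0 < a := fun k hk => (hp k hk).trans_le (hpa k hk)
  have hc0 : ∀ k ∈ s, 0 ≤ c k := fun k hk =>
    sub_nonneg.2 <| (div_le_one (ha0 k hk)).2 (hpa k hk)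
  have hc1 : ∀ k ∈ s, c k ≤ 1 := fun k hk =>
    sub_le_self _ (div_nonneg (hp k hk).le (ha0 k hk).le)
  calc (∑ k ∈ s, (p k / a - 1) * y k) ^ 2 = (∑ k ∈ s, c k * y k) ^ 2 := by
        rw [← neg_sq, ← sum_neg_distrib]
        simp only [c]
        congr 1
        exact sum_congr rfl fun k _ => by ring
    _ ≤ (∑ k ∈ s, c k) * ∑ k ∈ s, c k * y k ^ 2 :=
        sum_sq_le_sum_mul_sum_of_sq_le_mul s hc0
          (fun k hk => mul_nonneg (hc0 k hk) (sq_nonneg _)) fun k _ => le_of_eq (by ring)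
    _ ≤ #s * ∑ k ∈ s, c k * y k ^ 2 := by
        gcongr
        · exact sum_nonneg fun k hk => mul_nonneg (hc0 k hk) (sq_nonneg _)
        · simpa using sum_le_sum hc1
    _ = ∑ k ∈ s, #s * (c k * y k ^ 2) := mul_sum _ _ _
    _ ≤ _ := sum_le_sum fun k hk =>
        natCast_mul_one_sub_div_mul_sq_le (hp k hk) (hpa k hk) ha (y k)

section Poisson

variable {ι : Type*} [Fintype ι]

noncomputable def poissonMSE (p w y : ι → ℝ) : ℝ :=
  (∑ k, (p k / w k - 1) * y k) ^ 2 + ∑ k, (y k / w k) ^ 2 * (p k * (1 - p k))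

theorem integral_sq_sum_mul_div_sub_eq_poissonMSE {Ω : Type*} [MeasurableSpace Ω]
    {μ : Measure Ω} [IsProbabilityMeasure μ] {I : ι → Ω → ℝ}
    (h01 : ∀ k ω, I k ω = 0 ∨ I k ω = 1) (hmeas : ∀ k, Measurable (I k))
    (hindep : iIndepFun I μ) {p : ι → ℝ} (hp : ∀ k, p k = ∫ ω, I k ω ∂μ) (w y : ι → ℝ) :
    ∫ ω, (∑ k, I k ω * y k / w k - ∑ k, y k) ^ 2 ∂μ = poissonMSE p w y := by
  simp_rw [mul_div_assoc]
  rw [integral_sq_sum_mul_sub_const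
    (fun k => memLp_of_forall_eq_zero_or_eq_one (hmeas k) (h01 k) 2)
    (fun j k hjk => hindep.indepFun hjk)]
  simp_rw [variance_eq_mul_one_sub_of_forall_eq_zero_or_eq_one (hmeas _) (h01 _), ← hp,
    ← sum_sub_distrib]
  unfold poissonMSE
  congr 1
  · congr 1
    exact sum_congr rfl fun k _ => by ring
  · exact sum_congr rfl fun k _ => by ring

theorem poissonMSE_le_self (s : Finset ι) {p w : ι → ℝ} {a : ℝ} (hp : ∀ k, 0 < p k)
    (hpa : ∀ k ∈ s, p k ≤ a) (ha : a * (#s + 1) ≤ 1)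
    (hw_mem : ∀ k ∈ s, w k = a) (hw_not_mem : ∀ k ∉ s, w k = p k) (y : ι → ℝ) :
    poissonMSE p w y ≤ poissonMSE p p y := by
  have hbias : ∑ k, (p k / w k - 1) * y k = ∑ k ∈ s, (p k / a - 1) * y k := by
    rw [← sum_subset (subset_univ s) fun k _ hk => by
      rw [hw_not_mem k hk, div_self (hp k).ne', sub_self, zero_mul]]
    exact sum_congr rfl fun k hk => by rw [hw_mem k hk]
  have hvar : ∑ k, (y k / p k) ^ 2 * (p k * (1 - p k)) - ∑ k, (y k / w k) ^ 2 * (p k * (1 - p k))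
      = ∑ k ∈ s, ((y k / p k) ^ 2 - (y k / a) ^ 2) * (p k * (1 - p k)) := by
    rw [← sum_sub_distrib, ← sum_subset (subset_univ s) fun k _ hk => by
      rw [hw_not_mem k hk, sub_self]]
    exact sum_congr rfl fun k hk => by rw [hw_mem k hk, sub_mul]
  have hunbiased : ∑ k, (p k / p k - 1) * y k = 0 :=
    sum_eq_zero fun k _ => by rw [div_self (hp k).ne', sub_self, zero_mul]
  have hbound := sq_sum_div_sub_one_mul_le s (fun k _ => hp k) hpa ha y
  rw [poissonMSE, poissonMSE, hbias, hunbiased, zero_pow two_ne_zero]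
  linarith

end Poisson

theorem iht_le_ht_poisson_general
    {Ω : Type*} [MeasurableSpace Ω] (μ : Measure Ω) [IsProbabilityMeasure μ]
    (N : ℕ) (y : Fin N → ℝ) (I : Fin N → Ω → ℝ)
    (hI01 : ∀ k, ∀ ω, I k ω = 0 ∨ I k ω = 1)
    (hImeas : ∀ k, Measurable (I k))
    (hIindep : ProbabilityTheory.iIndepFun I μ)
    (π : Fin N → ℝ)
    (hπ : ∀ k, π k = ∫ ω, I k ω ∂μ)
    (hπmem : ∀ k, π k ∈ Set.Ioc (0 : ℝ) 1)
    (a : ℝ)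
    (U2 : Finset (Fin N)) (K : ℕ) (hK : U2.card = K)
    (hU2 : ∀ k ∈ U2, π k ≤ a)
    (haK : a ≤ 1 / ((K : ℝ) + 1))
    (πs : Fin N → ℝ)
    (hπs : ∀ k, πs k = if k ∈ U2 then a else π k) :
    (∫ ω, ((∑ k, I k ω * y k / πs k) - ∑ k, y k) ^ 2 ∂μ)
      ≤ ∫ ω, ((∑ k, I k ω * y k / π k) - ∑ k, y k) ^ 2 ∂μ := by
  rw [integral_sq_sum_mul_div_sub_eq_poissonMSE hI01 hImeas hIindep hπ,
    integral_sq_sum_mul_div_sub_eq_poissonMSE hI01 hImeas hIindep hπ]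
  refine poissonMSE_le_self U2 (fun k => (hπmem k).1) hU2 ?_
    (fun k hk => by rw [hπs, if_pos hk]) (fun k hk => by rw [hπs, if_neg hk]) y
  rwa [hK, ← le_div_iff₀ (by positivity)]

/-- Theorem 3 (Poisson sampling): under mutually independent sampling indicators and the
threshold condition `a ≤ 1/(K+1)`, the IHT estimator has MSE no larger than the HT estimator. -/
theorem iht_le_ht_poisson
    {Ω : Type*} [MeasurableSpace Ω] (μ : Measure Ω) [IsProbabilityMeasure μ]
    (N : ℕ) (y : Fin N → ℝ) (I : Fin N → Ω → ℝ)
    (hI01 : ∀ k, ∀ ω, I k ω = 0 ∨ I k ω = 1)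
    (hImeas : ∀ k, Measurable (I k))
    (hIindep : ProbabilityTheory.iIndepFun I μ)
    (π : Fin N → ℝ)
    (hπ : ∀ k, π k = ∫ ω, I k ω ∂μ)
    (hπmem : ∀ k, π k ∈ Set.Ioc (0 : ℝ) 1)
    (a : ℝ) (ha : a ∈ Set.Ioc (0 : ℝ) 1)
    (U2 : Finset (Fin N)) (K : ℕ) (hK : U2.card = K)
    (hU2 : ∀ k ∈ U2, π k ≤ a)
    (haK : a ≤ 1 / ((K : ℝ) + 1))
    (πs : Fin N → ℝ)
    (hπs : ∀ k, πs k = if k ∈ U2 then a else π k) :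
    (∫ ω, ((∑ k, I k ω * y k / πs k) - ∑ k, y k) ^ 2 ∂μ)
      ≤ ∫ ω, ((∑ k, I k ω * y k / π k) - ∑ k, y k) ^ 2 ∂μ :=
  iht_le_ht_poisson_general μ N y I hI01 hImeas hIindep π hπ hπmem a U2 K hK hU2 haK πs hπs
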